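/- Let W ⊆ L_Σ be a finite set of propositional formulas, D_W = {δ_p | p ∈ var(W)}, and consider the finite default theory (D_W, W^±). Then for each φ ∈ L_Σ: W ⊬_p φ if and only if there exists a set C ⊆ D_W such that φ ∉ Cn(W^± ∪ c(C)) and, for each δ ∈ D_W \ C, there is some extension E of (D_W, W^±) with c(δ) ∉ E. -/

import Mathlib

namespace Para

/-- Propositional formulas over an alphabet `α`. -/
inductive Fml (α : Type) : Type
  | atom : α → Fml α
  | top : Fml α
  | bot : Fml α
  | neg : Fml α → Fml α
  | conj : Fml α → Fml α → Fml α
  | disj : Fml α → Fml α → Fml α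
  | impl : Fml α → Fml α → Fml α

namespace Fml

variable {α β : Type}

/-- Biconditional `a ≡ b`. -/
def iff' (a b : Fml α) : Fml α := conj (impl a b) (impl b a)

/-- Classical satisfaction: truth of a formula under an interpretation
(a set of atoms, those being true). -/
def holds (M : Set α) : Fml α → Prop
  | atom p => p ∈ M
  | top => True
  | bot => False
  | neg φ => ¬ holds M φ
  | conj φ ψ => holds M φ ∧ holds M ψ
  | disj φ ψ => holds M φ ∨ holds M ψ
  | impl φ ψ => holds M φ → holds M ψ

/-- The set of atoms occurring in a formula. -/
def atoms : Fml α → Set α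
  | atom p => {p}
  | top => ∅
  | bot => ∅
  | neg φ => atoms φ
  | conj φ ψ => atoms φ ∪ atoms ψ
  | disj φ ψ => atoms φ ∪ atoms ψ
  | impl φ ψ => atoms φ ∪ atoms ψ

/-- Renaming of atoms. -/
def map (f : α → β) : Fml α → Fml β
  | atom p => atom (f p)
  | top => top
  | bot => bot
  | neg φ => neg (map f φ)
  | conj φ ψ => conj (map f φ) (map f ψ)
  | disj φ ψ => disj (map f φ) (map f ψ)
  | impl φ ψ => impl (map f φ) (map f ψ)

end Fml

/-- Classical consequence (= derivability, by soundness and completeness of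
classical propositional logic). -/
def Entails {α : Type} (S : Set (Fml α)) (φ : Fml α) : Prop :=
  ∀ M : Set α, (∀ ψ ∈ S, ψ.holds M) → φ.holds M

/-- Deductive closure `Cn`. -/
def Cn {α : Type} (S : Set (Fml α)) : Set (Fml α) := {φ | Entails S φ}

/-- Consistency: `⊥ ∉ Cn S`. -/
def Consistent {α : Type} (S : Set (Fml α)) : Prop := Fml.bot ∉ Cn S

/-- The atoms occurring in a set of formulas, `var(S)`. -/
def vars {α : Type} (S : Set (Fml α)) : Set α := ⋃ φ ∈ S, φ.atoms

/-- The alphabet `Σ ∪ Σ^±`: original atoms `p`, positive atoms `p⁺`,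
negative atoms `p⁻`. -/
inductive XAtom (α : Type) : Type
  | orig : α → XAtom α
  | pos : α → XAtom α
  | neg : α → XAtom α

/-- Signed translation with a polarity flag (`true` = positive occurrence):
positive occurrences of `p` become `p⁺`, negative ones become `¬p⁻`. -/
def signedAux {α : Type} : Fml α → Bool → Fml (XAtom α)
  | .atom p, true => .atom (.pos p)
  | .atom p, false => .neg (.atom (.neg p))
  | .top, _ => .top
  | .bot, _ => .bot
  | .neg φ, b => .neg (signedAux φ (!b))
  | .conj φ ψ, b => .conj (signedAux φ b) (signedAux ψ b)
  | .disj φ ψ, b => .disj (signedAux φ b) (signedAux ψ b)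
  | .impl φ ψ, b => .impl (signedAux φ (!b)) (signedAux ψ b)

/-- The signed translation `α^±`. -/
def signed {α : Type} (φ : Fml α) : Fml (XAtom α) := signedAux φ true

/-- Embedding of `L_Σ` into `L_{Σ∪Σ^±}`. -/
def emb {α : Type} : Fml α → Fml (XAtom α) := Fml.map XAtom.orig

/-- `W^± = {α^± | α ∈ W}`. -/
def signedSet {α : Type} (W : Set (Fml α)) : Set (Fml (XAtom α)) := signed '' W

/-- A default rule `(pre : jus / con)`. -/
structure Dflt (α : Type) where
  pre : Fml α
  jus : Fml α
  con : Fml α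

/-- Atoms occurring in a default rule. -/
def Dflt.atoms {α : Type} (d : Dflt α) : Set α :=
  d.pre.atoms ∪ d.jus.atoms ∪ d.con.atoms

/-- The Reiter sequence `E_1 = V`, `E_{n+1} = Cn(E_n) ∪ {γ | (α:β/γ) ∈ D, α ∈ E_n, ¬β ∉ E}`
(0-indexed here). -/
def extSeq {α : Type} (D : Set (Dflt α)) (V E : Set (Fml α)) : ℕ → Set (Fml α)
  | 0 => V
  | n+1 => Cn (extSeq D V E n) ∪
      {γ | ∃ d ∈ D, d.con = γ ∧ d.pre ∈ extSeq D V E n ∧ Fml.neg d.jus ∉ E}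

/-- `E` is a (Reiter) extension of the default theory `(D, V)`. -/
def IsExtension {α : Type} (D : Set (Dflt α)) (V E : Set (Fml α)) : Prop :=
  E = ⋃ n, extSeq D V E n

/-- `E` is a hierarchic extension of `(⋃ n, Dn n, V)` with respect to the
partition `⟨Dn⟩`: `E = ⋃ En` where `E_0 = V` and `E_{n+1}` is an extension
of `(Dn n, En n)`. -/
def IsHierExtension {α : Type} (Dn : ℕ → Set (Dflt α)) (V E : Set (Fml α)) : Prop :=
  ∃ En : ℕ → Set (Fml α), En 0 = V ∧ (∀ n, IsExtension (Dn n) (En n) (En (n+1))) ∧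
    E = ⋃ n, En n

/-- The signed default `δ_p = ( : p⁺≡¬p⁻ / (p≡p⁺)∧(¬p≡p⁻) )`. -/
def deltap {α : Type} (p : α) : Dflt (XAtom α) where
  pre := .top
  jus := Fml.iff' (.atom (.pos p)) (.neg (.atom (.neg p)))
  con := .conj (Fml.iff' (.atom (.orig p)) (.atom (.pos p)))
               (Fml.iff' (.neg (.atom (.orig p))) (.atom (.neg p)))

/-- `D_Σ = {δ_p | p ∈ Σ}`. -/
def DSigma (α : Type) : Set (Dflt (XAtom α)) := Set.range (deltap (α := α))

/-- `Π_S = {c(δ_p) | p ∈ Σ, ¬j(δ_p) ∉ S}`. -/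
def PiSet {α : Type} (S : Set (Fml (XAtom α))) : Set (Fml (XAtom α)) :=
  {f | ∃ p : α, Fml.neg (deltap p).jus ∉ S ∧ f = (deltap p).con}

/-- The set of all extensions of `(D_Σ, W^±)`. -/
def Exts {α : Type} (W : Set (Fml α)) : Set (Set (Fml (XAtom α))) :=
  {E | IsExtension (DSigma α) (signedSet W) E}

/-- Credulous unsigned consequence `W ⊢_c φ`. -/
def CredU {α : Type} (W : Set (Fml α)) (φ : Fml α) : Prop :=
  ∃ E ∈ Exts W, emb φ ∈ Cn (signedSet W ∪ PiSet E)

/-- Skeptical unsigned consequence `W ⊢_s φ`. -/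
def SkepU {α : Type} (W : Set (Fml α)) (φ : Fml α) : Prop :=
  ∀ E ∈ Exts W, emb φ ∈ Cn (signedSet W ∪ PiSet E)

/-- Prudent unsigned consequence `W ⊢_p φ`. -/
def PrudU {α : Type} (W : Set (Fml α)) (φ : Fml α) : Prop :=
  emb φ ∈ Cn (signedSet W ∪ ⋂ E ∈ Exts W, PiSet E)

/-- Credulous signed consequence `W ⊢_c^± φ`. -/
def CredS {α : Type} (W : Set (Fml α)) (φ : Fml α) : Prop :=
  ∃ E ∈ Exts W, signed φ ∈ Cn (signedSet W ∪ PiSet E)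

/-- Skeptical signed consequence `W ⊢_s^± φ`. -/
def SkepS {α : Type} (W : Set (Fml α)) (φ : Fml α) : Prop :=
  ∀ E ∈ Exts W, signed φ ∈ Cn (signedSet W ∪ PiSet E)

/-- Prudent signed consequence `W ⊢_p^± φ`. -/
def PrudS {α : Type} (W : Set (Fml α)) (φ : Fml α) : Prop :=
  signed φ ∈ Cn (signedSet W ∪ ⋂ E ∈ Exts W, PiSet E)

def Cc {α : Type} (W : Set (Fml α)) : Set (Fml α) := {φ | CredU W φ}
def Cs {α : Type} (W : Set (Fml α)) : Set (Fml α) := {φ | SkepU W φ}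
def Cp {α : Type} (W : Set (Fml α)) : Set (Fml α) := {φ | PrudU W φ}
def CcPM {α : Type} (W : Set (Fml α)) : Set (Fml α) := {φ | CredS W φ}
def CsPM {α : Type} (W : Set (Fml α)) : Set (Fml α) := {φ | SkepS W φ}
def CpPM {α : Type} (W : Set (Fml α)) : Set (Fml α) := {φ | PrudS W φ}

/-- `J'` is a maximal subset of `J` consistent with `V`. -/
def IsMaxConsSub {α : Type} (V J' J : Set (Fml α)) : Prop :=
  J' ⊆ J ∧ Consistent (V ∪ J') ∧
    ∀ J'', J' ⊆ J'' → J'' ⊆ J → Consistent (V ∪ J'') → J'' = J'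

/-- Quantified Boolean formulas over an alphabet `α`. -/
inductive QBF (α : Type) : Type
  | atom : α → QBF α
  | top : QBF α
  | bot : QBF α
  | neg : QBF α → QBF α
  | conj : QBF α → QBF α → QBF α
  | disj : QBF α → QBF α → QBF α
  | impl : QBF α → QBF α → QBF α
  | all : α → QBF α → QBF α
  | ex : α → QBF α → QBF α

/-- Truth of a QBF under an interpretation (a set of atoms):
`∀p Ψ` is true iff `Ψ` is true with `p` set to true and with `p` set to false,
dually for `∃p Ψ`. -/
def QBF.holds {α : Type} : Set α → QBF α → Prop
  | M, .atom p => p ∈ M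
  | _, .top => True
  | _, .bot => False
  | M, .neg Φ => ¬ QBF.holds M Φ
  | M, .conj Φ Ψ => QBF.holds M Φ ∧ QBF.holds M Ψ
  | M, .disj Φ Ψ => QBF.holds M Φ ∨ QBF.holds M Ψ
  | M, .impl Φ Ψ => QBF.holds M Φ → QBF.holds M Ψ
  | M, .all p Φ => QBF.holds (M ∪ {p}) Φ ∧ QBF.holds (M \ {p}) Φ
  | M, .ex p Φ => QBF.holds (M ∪ {p}) Φ ∨ QBF.holds (M \ {p}) Φ

/-- A QBF is valid iff it is true under every interpretation. -/
def QBF.Valid {α : Type} (Φ : QBF α) : Prop := ∀ M : Set α, Φ.holds M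

/-- Propositional formulas are (quantifier-free) QBFs. -/
def Fml.toQBF {α : Type} : Fml α → QBF α
  | .atom p => .atom p
  | .top => .top
  | .bot => .bot
  | .neg φ => .neg φ.toQBF
  | .conj φ ψ => .conj φ.toQBF ψ.toQBF
  | .disj φ ψ => .disj φ.toQBF ψ.toQBF
  | .impl φ ψ => .impl φ.toQBF ψ.toQBF

/-- Conjunction of a finite list of QBFs. -/
def QBF.conjList {α : Type} (l : List (QBF α)) : QBF α := l.foldr QBF.conj QBF.top

/-- `∃P Φ`: block of existential quantifiers over the atoms in `P`. -/
def QBF.exList {α : Type} (P : List α) (Φ : QBF α) : QBF α := P.foldr QBF.ex Φ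

/-- `∀P Φ`: block of universal quantifiers over the atoms in `P`. -/
def QBF.allList {α : Type} (P : List α) (Φ : QBF α) : QBF α := P.foldr QBF.all Φ

/-- The module `C[T,S] = ∃P (T ∧ (G ≤ S))`, where `T` is given as the list `Ts`
of its elements and the pairs `(g_i, φ_i)` encode `G ≤ S = ⋀ (g_i → φ_i)`. -/
def CMod {α : Type} (P : List α) (Ts : List (Fml α)) (pairs : List (α × Fml α)) : QBF α :=
  QBF.exList P (QBF.conj (QBF.conjList (Ts.map Fml.toQBF))
    (QBF.conjList (pairs.map (fun gp => QBF.impl (QBF.atom gp.1) gp.2.toQBF))))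

/-- The module `Ext[T]` for a finite default theory `T = (D,V)` with
`D = {δ_1,…,δ_n}` and guessing atoms `g_1,…,g_n`:
`C[V, j(D)] ∧ ⋀_i (¬g_i → ¬ C[V ∪ {j(δ_i)}, j(D \ {δ_i})])`. -/
def ExtMod {α : Type} {n : ℕ} (P : List α) (Vl : List (Fml α))
    (δ : Fin n → Dflt α) (g : Fin n → α) : QBF α :=
  QBF.conj
    (CMod P Vl ((List.finRange n).map fun i => (g i, (δ i).jus)))
    (QBF.conjList ((List.finRange n).map fun i =>
      QBF.impl (QBF.neg (QBF.atom (g i)))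
        (QBF.neg (CMod P (Vl ++ [(δ i).jus])
          (((List.finRange n).filter (fun j => j != i)).map fun j => (g j, (δ j).jus))))))

/-- The module `Conseq[T,φ] = ∀P' (V ∧ (G ≤ c(D)) → φ)`. -/
def ConseqMod {α : Type} {n : ℕ} (P' : List α) (Vl : List (Fml α))
    (δ : Fin n → Dflt α) (g : Fin n → α) (φ : Fml α) : QBF α :=
  QBF.allList P'
    (QBF.impl
      (QBF.conj (QBF.conjList (Vl.map Fml.toQBF))
        (QBF.conjList ((List.finRange n).map fun i =>
          QBF.impl (QBF.atom (g i)) (δ i).con.toQBF)))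
      φ.toQBF)

/-!
Write `c_p` and `j_p` for the consequent and the justification of `δ_p`, and `A = var(W)`.
The defaults are prerequisite-free, so an extension is `E = Cn(W^± ∪ c(S))` for
`S = {p | ¬j_p ∉ E}`. As `W^±` only mentions the signed atoms `p⁺, p⁻` with `p ∈ A`,
a model of `W^± ∪ j(T)` with `T ⊆ A` can be repaired into a model of `W^± ∪ c(T ∪ U)`
for any `U` disjoint from `A`: set `p := p⁺` for `p ∈ T`, and `p⁺ := p`, `p⁻ := ¬p`
for `p ∈ U`. Consequently, if `W^±` is consistent and `A ⊆ B`, the extensions of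
`({δ_p | p ∈ B}, W^±)` are exactly the theories `Cn(W^± ∪ c(T ∪ (B \ A)))` with `T` a
maximal subset of `A` such that `W^± ∪ j(T)` is consistent. Let `I` be the intersection of
these maximal sets (there is one, as `A` is finite). Taking `B = A`, the defaults whose
consequent lies in every extension of `(D_W, W^±)` are the `δ_p` with `p ∈ I`, and a set `C`
as in the statement exists iff `φ ∉ Cn(W^± ∪ c(I))`. Taking `B = Σ`, `W ⊢_p φ` iff
`φ ∈ Cn(W^± ∪ c(I ∪ (Σ \ A)))`, and the defaults `δ_q` with `q ∉ A` may be dropped: they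
only constrain `q⁺, q⁻`, which occur neither in `φ` nor in `W^± ∪ c(I)`.
-/

section Semantics

variable {β γ : Type}

lemma subset_Cn (S : Set (Fml β)) : S ⊆ Cn S := fun _ hψ _ hM => hM _ hψ

lemma Cn_mono {S T : Set (Fml β)} (h : S ⊆ T) : Cn S ⊆ Cn T :=
  fun _ hφ M hM => hφ M fun ψ hψ => hM ψ (h hψ)

lemma Cn_subset_Cn {S T : Set (Fml β)} (h : S ⊆ Cn T) : Cn S ⊆ Cn T :=
  fun _ hφ M hM => hφ M fun _ hψ => h hψ M hM

lemma consistent_iff_exists_model {S : Set (Fml β)} :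
    Consistent S ↔ ∃ M : Set β, ∀ ψ ∈ S, ψ.holds M := by
  simp [Consistent, Cn, Entails, Fml.holds]

lemma neg_notMem_Cn_iff {S : Set (Fml β)} {ψ : Fml β} :
    Fml.neg ψ ∉ Cn S ↔ ∃ M : Set β, (∀ χ ∈ S, χ.holds M) ∧ ψ.holds M := by
  simp [Cn, Entails, Fml.holds]

lemma mem_Cn_of_not_consistent {S : Set (Fml β)} (h : ¬ Consistent S) (ψ : Fml β) :
    ψ ∈ Cn S := by
  simp only [consistent_iff_exists_model, not_exists, not_forall] at h
  intro M hM
  obtain ⟨χ, hχ, hχM⟩ := h M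
  exact absurd (hM χ hχ) hχM

lemma holds_map (f : γ → β) (M : Set β) (ψ : Fml γ) :
    (ψ.map f).holds M ↔ ψ.holds (f ⁻¹' M) := by
  induction ψ <;> simp [Fml.map, Fml.holds, *]

lemma atoms_finite (ψ : Fml β) : ψ.atoms.Finite := by
  induction ψ <;> simp [Fml.atoms, *]

lemma vars_finite {W : Set (Fml β)} (hW : W.Finite) : (vars W).Finite :=
  hW.biUnion fun ψ _ => atoms_finite ψ

end Semantics

section PrerequisiteFree

variable {β : Type}

lemma extSeq_subset_succ (D : Set (Dflt β)) (V E : Set (Fml β)) (n : ℕ) :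
    extSeq D V E n ⊆ extSeq D V E (n + 1) :=
  fun _ hψ => Or.inl (subset_Cn _ hψ)

lemma isExtension_iff_of_pre_eq_top {D : Set (Dflt β)} (hD : ∀ d ∈ D, d.pre = Fml.top)
    {V E : Set (Fml β)} :
    IsExtension D V E ↔ E = Cn (V ∪ {γ | ∃ d ∈ D, d.con = γ ∧ Fml.neg d.jus ∉ E}) := by
  set Γ := {γ | ∃ d ∈ D, d.con = γ ∧ Fml.neg d.jus ∉ E}
  have hle : ∀ n, extSeq D V E n ⊆ Cn (V ∪ Γ) := by
    intro n
    induction n with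
    | zero => exact Set.subset_union_left.trans (subset_Cn _)
    | succ n ih =>
      rintro ψ (hψ | ⟨d, hd, rfl, -, hj⟩)
      · exact Cn_subset_Cn ih hψ
      · exact subset_Cn _ (Or.inr ⟨d, hd, rfl, hj⟩)
  -- `⊤ ∈ extSeq 1`, so all of `Γ` enters at stage 2 and all of `Cn (V ∪ Γ)` at stage 3.
  have hΓ : Γ ⊆ extSeq D V E 2 := by
    rintro _ ⟨d, hd, rfl, hj⟩
    exact Or.inr ⟨d, hd, rfl, (hD d hd).symm ▸ Or.inl fun _ _ => trivial, hj⟩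
  have hV : V ⊆ extSeq D V E 2 := (extSeq_subset_succ D V E 0).trans (extSeq_subset_succ D V E 1)
  have hge : Cn (V ∪ Γ) ⊆ extSeq D V E 3 := fun _ hψ => Or.inl (Cn_mono (Set.union_subset hV hΓ) hψ)
  rw [IsExtension, (Set.iUnion_subset hle).antisymm (hge.trans (Set.subset_iUnion _ 3))]

def skepticalDefaults (D : Set (Dflt β)) (V : Set (Fml β)) : Set (Dflt β) :=
  {d ∈ D | ∀ E, IsExtension D V E → d.con ∈ E}

lemma exists_subset_notMem_Cn_iff {D : Set (Dflt β)} {V : Set (Fml β)} {ψ : Fml β} :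
    (∃ C ⊆ D, ψ ∉ Cn (V ∪ Dflt.con '' C) ∧
        ∀ d ∈ D \ C, ∃ E, IsExtension D V E ∧ d.con ∉ E) ↔
      ψ ∉ Cn (V ∪ Dflt.con '' skepticalDefaults D V) := by
  constructor
  · rintro ⟨C, -, hψ, hC⟩ hmem
    refine hψ (Cn_mono (Set.union_subset_union_right _ (Set.image_mono ?_)) hmem)
    intro d ⟨hd, hskep⟩
    by_contra hdC
    obtain ⟨E, hE, hdE⟩ := hC d ⟨hd, hdC⟩
    exact hdE (hskep E hE)
  · intro hψ
    refine ⟨skepticalDefaults D V, fun d hd => hd.1, hψ, fun d ⟨hd, hdC⟩ => ?_⟩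
    simpa [skepticalDefaults, hd] using hdC

end PrerequisiteFree

section SignedDefaults

variable {α : Type}

def jusSet (T : Set α) : Set (Fml (XAtom α)) := (fun p => (deltap p).jus) '' T

def conSet (T : Set α) : Set (Fml (XAtom α)) := (fun p => (deltap p).con) '' T

lemma holds_jus_iff {M : Set (XAtom α)} {p : α} :
    (deltap p).jus.holds M ↔ (XAtom.pos p ∈ M ↔ XAtom.neg p ∉ M) := by
  simp only [deltap, Fml.iff', Fml.holds]
  tauto

lemma holds_con_iff {M : Set (XAtom α)} {p : α} :
    (deltap p).con.holds M ↔
      (XAtom.pos p ∈ M ↔ XAtom.orig p ∈ M) ∧ (XAtom.neg p ∈ M ↔ XAtom.orig p ∉ M) := by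
  simp only [deltap, Fml.iff', Fml.holds]
  tauto

lemma holds_jus_of_holds_con {M : Set (XAtom α)} {p : α} (h : (deltap p).con.holds M) :
    (deltap p).jus.holds M := by
  rw [holds_con_iff] at h
  rw [holds_jus_iff]
  tauto

lemma deltap_con_injective : Function.Injective fun p : α => (deltap p).con := by
  intro p q h
  simpa [deltap, Fml.iff'] using h

lemma neg_jus_notMem_Cn {X : Set (Fml (XAtom α))} (hX : Consistent X) {p : α}
    (hp : (deltap p).con ∈ Cn X) : Fml.neg (deltap p).jus ∉ Cn X := by
  obtain ⟨M, hM⟩ := consistent_iff_exists_model.1 hX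
  exact neg_notMem_Cn_iff.2 ⟨M, hM, holds_jus_of_holds_con (hp M hM)⟩

lemma isExtension_deltap_iff {B : Set α} {V E : Set (Fml (XAtom α))} :
    IsExtension (deltap '' B) V E ↔
      E = Cn (V ∪ conSet {p ∈ B | Fml.neg (deltap p).jus ∉ E}) := by
  rw [isExtension_iff_of_pre_eq_top (by rintro _ ⟨p, -, rfl⟩; rfl)]
  have hΓ : {γ | ∃ d ∈ deltap '' B, d.con = γ ∧ Fml.neg d.jus ∉ E} =
      conSet {p ∈ B | Fml.neg (deltap p).jus ∉ E} := by
    ext γ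
    constructor
    · rintro ⟨_, ⟨p, hp, rfl⟩, rfl, hj⟩
      exact ⟨p, ⟨hp, hj⟩, rfl⟩
    · rintro ⟨p, ⟨hp, hj⟩, rfl⟩
      exact ⟨deltap p, ⟨p, hp, rfl⟩, rfl, hj⟩
  rw [hΓ]

def repair (T U : Set α) (M : Set (XAtom α)) : Set (XAtom α) := fun x =>
  match x with
  | .orig p => p ∈ T ∧ XAtom.pos p ∈ M ∨ p ∉ T ∧ XAtom.orig p ∈ M
  | .pos p => p ∈ U ∧ XAtom.orig p ∈ M ∨ p ∉ U ∧ XAtom.pos p ∈ M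
  | .neg p => p ∈ U ∧ XAtom.orig p ∉ M ∨ p ∉ U ∧ XAtom.neg p ∈ M

section Repair

variable {T U : Set α} {M : Set (XAtom α)} {p : α}

@[simp] lemma orig_mem_repair :
    XAtom.orig p ∈ repair T U M ↔ p ∈ T ∧ XAtom.pos p ∈ M ∨ p ∉ T ∧ XAtom.orig p ∈ M :=
  Iff.rfl

@[simp] lemma pos_mem_repair :
    XAtom.pos p ∈ repair T U M ↔ p ∈ U ∧ XAtom.orig p ∈ M ∨ p ∉ U ∧ XAtom.pos p ∈ M :=
  Iff.rfl

@[simp] lemma neg_mem_repair :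
    XAtom.neg p ∈ repair T U M ↔ p ∈ U ∧ XAtom.orig p ∉ M ∨ p ∉ U ∧ XAtom.neg p ∈ M :=
  Iff.rfl

lemma holds_con_repair_of_mem_left (hpT : p ∈ T) (hpU : p ∉ U) (hj : (deltap p).jus.holds M) :
    (deltap p).con.holds (repair T U M) := by
  rw [holds_jus_iff] at hj
  simp only [holds_con_iff, orig_mem_repair, pos_mem_repair, neg_mem_repair]
  tauto

lemma holds_con_repair_of_mem_right (hpT : p ∉ T) (hpU : p ∈ U) :
    (deltap p).con.holds (repair T U M) := by
  simp [holds_con_iff, hpT, hpU]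

lemma holds_con_repair_of_notMem (hpT : p ∉ T) (hpU : p ∉ U) :
    (deltap p).con.holds (repair T U M) ↔ (deltap p).con.holds M := by
  simp [holds_con_iff, hpT, hpU]

lemma holds_emb_repair_empty (φ : Fml α) :
    (emb φ).holds (repair ∅ U M) ↔ (emb φ).holds M := by
  have h : XAtom.orig ⁻¹' repair ∅ U M = XAtom.orig ⁻¹' M := by ext; simp
  rw [emb, holds_map, holds_map, h]

end Repair

def SignedOver (V : Set (Fml (XAtom α))) (A : Set α) : Prop :=
  ∀ ψ ∈ V, ∀ M N : Set (XAtom α),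
    (∀ p ∈ A, (XAtom.pos p ∈ M ↔ XAtom.pos p ∈ N) ∧ (XAtom.neg p ∈ M ↔ XAtom.neg p ∈ N)) →
      (ψ.holds M ↔ ψ.holds N)

lemma holds_signedAux_congr {M N : Set (XAtom α)} (ψ : Fml α)
    (h : ∀ p ∈ ψ.atoms, (XAtom.pos p ∈ M ↔ XAtom.pos p ∈ N) ∧ (XAtom.neg p ∈ M ↔ XAtom.neg p ∈ N))
    (b : Bool) : (signedAux ψ b).holds M ↔ (signedAux ψ b).holds N := by
  induction ψ generalizing b with
  | atom p => cases b <;> simp [signedAux, Fml.holds, h p rfl]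
  | top | bot => rfl
  | neg ψ ih => exact not_congr (ih h !b)
  | conj ψ χ ih₁ ih₂ | disj ψ χ ih₁ ih₂ | impl ψ χ ih₁ ih₂ =>
    simp only [signedAux, Fml.holds,
      ih₁ (fun p hp => h p (Or.inl hp)), ih₂ (fun p hp => h p (Or.inr hp))]

lemma signedOver_signedSet (W : Set (Fml α)) : SignedOver (signedSet W) (vars W) := by
  rintro _ ⟨ψ, hψ, rfl⟩ M N h
  exact holds_signedAux_congr ψ (fun p hp => h p (Set.mem_biUnion hψ hp)) true

lemma SignedOver.holds_repair_iff {V : Set (Fml (XAtom α))} {A : Set α} (hV : SignedOver V A)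
    {T U : Set α} (hU : Disjoint U A) {M : Set (XAtom α)} {ψ : Fml (XAtom α)} (hψ : ψ ∈ V) :
    ψ.holds (repair T U M) ↔ ψ.holds M :=
  hV ψ hψ _ _ fun p hp => by simp [Set.disjoint_right.1 hU hp]

end SignedDefaults

section Extensions

variable {α : Type} {V : Set (Fml (XAtom α))} {A B T : Set α}

def IsJusConsistent (V : Set (Fml (XAtom α))) (A T : Set α) : Prop :=
  T ⊆ A ∧ Consistent (V ∪ jusSet T)

lemma exists_maximal_isJusConsistent (hA : A.Finite) (hV : Consistent V) :
    ∃ T, Maximal (IsJusConsistent V A) T :=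
  (hA.finite_subsets.subset fun _ hT => hT.1).exists_maximal
    ⟨∅, Set.empty_subset A, by simpa [jusSet] using hV⟩

lemma SignedOver.consistent_conSet_union (hV : SignedOver V A) (hT : IsJusConsistent V A T)
    {U : Set α} (hU : Disjoint U A) : Consistent (V ∪ conSet (T ∪ U)) := by
  obtain ⟨M, hM⟩ := consistent_iff_exists_model.1 hT.2
  refine consistent_iff_exists_model.2 ⟨repair T U M, ?_⟩
  rintro ψ (hψ | ⟨p, hp | hp, rfl⟩)
  · exact (hV.holds_repair_iff hU hψ).2 (hM ψ (Or.inl hψ))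
  · exact holds_con_repair_of_mem_left hp (Set.disjoint_right.1 hU (hT.1 hp))
      (hM _ (Or.inr ⟨p, hp, rfl⟩))
  · exact holds_con_repair_of_mem_right (fun hpT => Set.disjoint_right.1 hU (hT.1 hpT) hp) hp

lemma SignedOver.setOf_neg_jus_notMem_eq (hV : SignedOver V A)
    (hT : Maximal (IsJusConsistent V A) T) (hAB : A ⊆ B) :
    {p ∈ B | Fml.neg (deltap p).jus ∉ Cn (V ∪ conSet (T ∪ (B \ A)))} = T ∪ (B \ A) := by
  have hcons := hV.consistent_conSet_union hT.1 (U := B \ A) Set.disjoint_sdiff_left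
  ext p
  constructor
  · rintro ⟨hpB, hpj⟩
    by_cases hpA : p ∈ A
    swap
    · exact Or.inr ⟨hpB, hpA⟩
    obtain ⟨N, hN, hNj⟩ := neg_notMem_Cn_iff.1 hpj
    have hins : IsJusConsistent V A (insert p T) := by
      refine ⟨Set.insert_subset hpA hT.1.1, consistent_iff_exists_model.2 ⟨N, ?_⟩⟩
      rintro ψ (hψ | ⟨q, rfl | hq, rfl⟩)
      · exact hN ψ (Or.inl hψ)
      · exact hNj
      · exact holds_jus_of_holds_con (hN _ (Or.inr ⟨q, Or.inl hq, rfl⟩))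
    exact Or.inl (hT.2 hins (Set.subset_insert p T) (Set.mem_insert p T))
  · intro hp
    refine ⟨hp.elim (fun hpT => hAB (hT.1.1 hpT)) (·.1), neg_jus_notMem_Cn hcons ?_⟩
    exact subset_Cn _ (Or.inr ⟨p, hp, rfl⟩)

lemma SignedOver.isExtension_of_maximal (hV : SignedOver V A)
    (hT : Maximal (IsJusConsistent V A) T) (hAB : A ⊆ B) :
    IsExtension (deltap '' B) V (Cn (V ∪ conSet (T ∪ (B \ A)))) := by
  rw [isExtension_deltap_iff, hV.setOf_neg_jus_notMem_eq hT hAB]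

lemma SignedOver.exists_maximal_of_isExtension (hV : SignedOver V A) (hVc : Consistent V)
    (hAB : A ⊆ B) {E : Set (Fml (XAtom α))} (hE : IsExtension (deltap '' B) V E) :
    ∃ T, Maximal (IsJusConsistent V A) T ∧ E = Cn (V ∪ conSet (T ∪ (B \ A))) := by
  set S := {p ∈ B | Fml.neg (deltap p).jus ∉ E}
  have hES : E = Cn (V ∪ conSet S) := isExtension_deltap_iff.1 hE
  have hcons : Consistent (V ∪ conSet S) := by
    by_contra hinc
    have hS : S = ∅ := Set.eq_empty_of_forall_notMem fun p hp =>
      hp.2 (hES ▸ mem_Cn_of_not_consistent hinc _)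
    exact hinc (by simpa [hS, conSet] using hVc)
  have hT : IsJusConsistent V A (S ∩ A) := by
    obtain ⟨M, hM⟩ := consistent_iff_exists_model.1 hcons
    refine ⟨Set.inter_subset_right, consistent_iff_exists_model.2 ⟨M, ?_⟩⟩
    rintro ψ (hψ | ⟨p, hp, rfl⟩)
    · exact hM ψ (Or.inl hψ)
    · exact holds_jus_of_holds_con (hM _ (Or.inr ⟨p, hp.1, rfl⟩))
  -- `V ∪ c(T' ∪ (B \ A))` is consistent and contains `c(S)`, so it keeps each `¬j_p` out of `E`.
  have hsub : ∀ T', IsJusConsistent V A T' → S ∩ A ⊆ T' → T' ∪ (B \ A) ⊆ S := by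
    intro T' hT' hST' p hp
    have hcons' := hV.consistent_conSet_union hT' (U := B \ A) Set.disjoint_sdiff_left
    have hSsub : S ⊆ T' ∪ (B \ A) := fun q hq =>
      (em (q ∈ A)).elim (fun hqA => Or.inl (hST' ⟨hq, hqA⟩)) fun hqA => Or.inr ⟨hq.1, hqA⟩
    refine ⟨hp.elim (fun hpT => hAB (hT'.1 hpT)) (·.1), fun hpE => ?_⟩
    refine neg_jus_notMem_Cn hcons' (subset_Cn _ (Or.inr ⟨p, hp, rfl⟩)) ?_
    exact Cn_mono (Set.union_subset_union_right _ (Set.image_mono hSsub)) (hES ▸ hpE)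
  have hSeq : S = S ∩ A ∪ (B \ A) :=
    Set.Subset.antisymm (fun p hp =>
      (em (p ∈ A)).elim (fun hpA => Or.inl ⟨hp, hpA⟩) fun hpA => Or.inr ⟨hp.1, hpA⟩)
      (hsub _ hT le_rfl)
  refine ⟨S ∩ A, ⟨hT, fun T' hT' hST' => ?_⟩, hSeq ▸ hES⟩
  exact fun p hp => ⟨hsub T' hT' hST' (Or.inl hp), hT'.1 hp⟩

end Extensions

section Core

variable {α : Type} {V : Set (Fml (XAtom α))} {A : Set α}

def jusCore (V : Set (Fml (XAtom α))) (A : Set α) : Set α :=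
  {p ∈ A | ∀ T, Maximal (IsJusConsistent V A) T → p ∈ T}

lemma SignedOver.skepticalDefaults_eq (hV : SignedOver V A) (hVc : Consistent V) :
    skepticalDefaults (deltap '' A) V = deltap '' jusCore V A := by
  have key : ∀ p ∈ A, (∀ E, IsExtension (deltap '' A) V E → (deltap p).con ∈ E) ↔
      ∀ T, Maximal (IsJusConsistent V A) T → p ∈ T := by
    intro p hpA
    constructor
    · intro h T hT
      have hE := hV.isExtension_of_maximal hT le_rfl
      have hj := neg_jus_notMem_Cn (hV.consistent_conSet_union hT.1 Set.disjoint_sdiff_left)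
        (h _ hE)
      have hmem : p ∈ {p ∈ A | Fml.neg (deltap p).jus ∉ Cn (V ∪ conSet (T ∪ (A \ A)))} :=
        ⟨hpA, hj⟩
      rw [hV.setOf_neg_jus_notMem_eq hT le_rfl] at hmem
      simpa using hmem
    · intro h E hE
      obtain ⟨T, hT, rfl⟩ := hV.exists_maximal_of_isExtension hVc le_rfl hE
      exact subset_Cn _ (Or.inr ⟨p, Or.inl (h T hT), rfl⟩)
  ext d
  constructor
  · rintro ⟨⟨p, hpA, rfl⟩, hd⟩
    exact ⟨p, ⟨hpA, (key p hpA).1 hd⟩, rfl⟩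
  · rintro ⟨p, ⟨hpA, hp⟩, rfl⟩
    exact ⟨⟨p, hpA, rfl⟩, (key p hpA).2 hp⟩

lemma SignedOver.biInter_piSet_eq (hV : SignedOver V A) (hVc : Consistent V)
    (hex : ∃ T, Maximal (IsJusConsistent V A) T) :
    ⋂ E ∈ {E | IsExtension (DSigma α) V E}, PiSet E = conSet (jusCore V A ∪ (Set.univ \ A)) := by
  have hD : DSigma α = deltap '' Set.univ := Set.image_univ.symm
  have hPi : ∀ T, Maximal (IsJusConsistent V A) T →
      PiSet (Cn (V ∪ conSet (T ∪ (Set.univ \ A)))) = conSet (T ∪ (Set.univ \ A)) := by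
    intro T hT
    conv_rhs => rw [← hV.setOf_neg_jus_notMem_eq hT (Set.subset_univ A)]
    ext f
    simp [PiSet, conSet, eq_comm]
  ext f
  simp only [Set.mem_iInter, hD]
  constructor
  · intro hf
    obtain ⟨T₀, hT₀⟩ := hex
    obtain ⟨p, -, rfl⟩ := hPi T₀ hT₀ ▸ hf _ (hV.isExtension_of_maximal hT₀ (Set.subset_univ A))
    refine ⟨p, (em (p ∈ A)).elim (fun hpA => Or.inl ⟨hpA, fun T hT => ?_⟩)
      (fun hpA => Or.inr ⟨trivial, hpA⟩), rfl⟩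
    obtain ⟨q, hq, hqp⟩ := hPi T hT ▸ hf _ (hV.isExtension_of_maximal hT (Set.subset_univ A))
    obtain rfl := deltap_con_injective hqp
    exact hq.elim id fun h => absurd hpA h.2
  · rintro ⟨p, hp, rfl⟩ E hE
    obtain ⟨T, hT, rfl⟩ := hV.exists_maximal_of_isExtension hVc (Set.subset_univ A) hE
    rw [hPi T hT]
    exact ⟨p, hp.elim (fun h => Or.inl (h.2 T hT)) Or.inr, rfl⟩

lemma SignedOver.emb_mem_Cn_conSet_union_iff (hV : SignedOver V A) {I U : Set α} (hI : I ⊆ A)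
    (hU : Disjoint U A) (φ : Fml α) :
    emb φ ∈ Cn (V ∪ conSet (I ∪ U)) ↔ emb φ ∈ Cn (V ∪ conSet I) := by
  refine ⟨fun h M hM => ?_,
    fun h => Cn_mono (Set.union_subset_union_right _ (Set.image_mono Set.subset_union_left)) h⟩
  refine (holds_emb_repair_empty (U := U) φ).1 (h _ ?_)
  rintro ψ (hψ | ⟨p, hp | hp, rfl⟩)
  · exact (hV.holds_repair_iff hU hψ).2 (hM ψ (Or.inl hψ))
  · exact (holds_con_repair_of_notMem (Set.notMem_empty p)
      (fun hpU => Set.disjoint_left.1 hU hpU (hI hp))).2 (hM _ (Or.inr ⟨p, hp, rfl⟩))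
  · exact holds_con_repair_of_mem_right (Set.notMem_empty p) hp

end Core

/-- For finite `W ⊆ L_Σ`, `D_W = {δ_p | p ∈ var(W)}` and each
`φ ∈ L_Σ`: `W ⊬_p φ` iff there is `C ⊆ D_W` with `φ ∉ Cn(W^± ∪ c(C))` and,
for each `δ ∈ D_W \ C`, some extension `E` of `(D_W, W^±)` with `c(δ) ∉ E`. -/
theorem prudent_characterisation {α : Type} (W : Set (Fml α)) (hW : W.Finite)
    (φ : Fml α) :
    ¬ PrudU W φ ↔
      ∃ C ⊆ deltap '' vars W,
        emb φ ∉ Cn (signedSet W ∪ Dflt.con '' C) ∧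
        ∀ d ∈ (deltap '' vars W) \ C,
          ∃ E, IsExtension (deltap '' vars W) (signedSet W) E ∧ d.con ∉ E := by
  have hV := signedOver_signedSet W
  rw [exists_subset_notMem_Cn_iff]
  by_cases hVc : Consistent (signedSet W)
  · rw [hV.skepticalDefaults_eq hVc, Set.image_image, PrudU, Exts,
      hV.biInter_piSet_eq hVc (exists_maximal_isJusConsistent (vars_finite hW) hVc),
      hV.emb_mem_Cn_conSet_union_iff (fun p hp => hp.1) Set.disjoint_sdiff_left]
    rfl
  · have hall : ∀ X, emb φ ∈ Cn (signedSet W ∪ X) := fun X =>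
      mem_Cn_of_not_consistent (fun h => hVc fun hbot => h (Cn_mono Set.subset_union_left hbot)) _
    simp only [PrudU, hall]

end Para
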